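/- arXiv:1508.01784 — 4 statements merged into one kernel-verified Lean document; each statement's English description precedes it below -/
import Mathlib

section
/- Let G be a graph of order n with signless Laplacian eigenvalues q_1 ≥ … ≥ q_n. Then every set of edges whose deletion from G leaves a bipartite graph has size at least q_n·n/4; that is, one must remove at least q_min(G)·n/4 edges to make G bipartite. -/
open Matrix SimpleGraph Finset

/-- The signless Laplacian matrix `Q(G) = D + A` of a finite simple graph `G`. -/
noncomputable def signlessLaplacian {V : Type} [Fintype V] [DecidableEq V]
    (G : SimpleGraph V) : Matrix V V ℝ :=
  letI := Classical.decRel G.Adj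
  Matrix.diagonal (fun v => (G.degree v : ℝ)) + G.adjMatrix ℝ

theorem signlessLaplacian_isHermitian {V : Type} [Fintype V] [DecidableEq V]
    (G : SimpleGraph V) : (signlessLaplacian G).IsHermitian := by
  letI := Classical.decRel G.Adj
  unfold signlessLaplacian
  refine Matrix.IsHermitian.add (Matrix.isHermitian_diagonal _) ?_
  rw [Matrix.IsHermitian, conjTranspose_eq_transpose_of_trivial]
  exact G.isSymm_adjMatrix

/-- `qmin G` is the smallest eigenvalue of the signless Laplacian of `G`. -/
noncomputable def qmin {V : Type} [Fintype V] [DecidableEq V] (G : SimpleGraph V) : ℝ :=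
  ⨅ i, (signlessLaplacian_isHermitian G).eigenvalues i

/-!
Colour the vertices of the bipartite graph `G - F` by `±1`, giving a vector `x` with
`xᵀx = n`. Since `xᵀ Q(G) x = ∑_{uv ∈ E(G)} (x_u + x_v)²`, an edge surviving in `G - F` joins
opposite colours and contributes `0`, while an edge of `F` contributes at most `4`. Hence
`q_min(G) · n ≤ xᵀ Q(G) x ≤ 4 |F|` by the Rayleigh principle.
-/

open scoped MatrixOrder in
theorem Matrix.IsHermitian.iInf_eigenvalues_mul_dotProduct_le {n : Type*} [Fintype n]
    [DecidableEq n] {A : Matrix n n ℝ} (hA : A.IsHermitian) (x : n → ℝ) :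
    (⨅ i, hA.eigenvalues i) * (x ⬝ᵥ x) ≤ x ⬝ᵥ (A *ᵥ x) := by
  have hle : algebraMap ℝ _ (⨅ i, hA.eigenvalues i) ≤ A := by
    rw [algebraMap_le_iff_le_spectrum hA.isSelfAdjoint, hA.spectrum_real_eq_range_eigenvalues]
    rintro _ ⟨i, rfl⟩
    exact ciInf_le (Finite.bddBelow_range _) i
  simpa [sub_mulVec, Algebra.algebraMap_eq_smul_one, smul_mulVec, dotProduct_smul] using
    (le_iff.mp hle).dotProduct_mulVec_nonneg x

namespace SimpleGraph

section SignVector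

variable {V : Type} {G : SimpleGraph V} (c : G.Coloring (Fin 2))

noncomputable def Coloring.signVector (v : V) : ℝ :=
  if c v = 0 then 1 else -1

theorem Coloring.signVector_sq (v : V) : c.signVector v ^ 2 = 1 := by
  unfold signVector; split_ifs <;> norm_num

theorem Coloring.add_signVector_sq_le (u v : V) : (c.signVector u + c.signVector v) ^ 2 ≤ 4 := by
  unfold signVector; split_ifs <;> norm_num

theorem Coloring.add_signVector_eq_zero_of_adj {u v : V} (h : G.Adj u v) :
    c.signVector u + c.signVector v = 0 := by
  have hne := c.valid h
  unfold signVector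
  split_ifs <;> first | omega | norm_num

theorem Coloring.dotProduct_signVector_self [Fintype V] :
    c.signVector ⬝ᵥ c.signVector = Fintype.card V := by
  simp [dotProduct, ← sq, c.signVector_sq]

end SignVector

theorem edgeFinset_fromEdgeSet_subset {V : Type} (F : Finset (Sym2 V))
    [Fintype (fromEdgeSet (F : Set (Sym2 V))).edgeSet] :
    (fromEdgeSet (F : Set (Sym2 V))).edgeFinset ⊆ F := fun e he => by
  simp only [mem_edgeFinset, edgeSet_fromEdgeSet] at he
  exact he.1

theorem sum_sum_ite_adj_eq_two_mul_card_edgeFinset {V : Type} [Fintype V] (G : SimpleGraph V)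
    [DecidableRel G.Adj] [Fintype G.edgeSet] :
    ∑ i, ∑ j, (if G.Adj i j then (1 : ℝ) else 0) = 2 * #G.edgeFinset := by
  simp_rw [← degree_eq_sum_if_adj]
  rw [← Nat.cast_sum, G.sum_degrees_eq_twice_card_edges]
  push_cast
  -- the two `edgeFinset`s differ only in their `Fintype G.edgeSet` instances
  congr!

variable {V : Type} [Fintype V] [DecidableEq V] (G : SimpleGraph V)

theorem signlessLaplacian_eq [DecidableRel G.Adj] :
    signlessLaplacian G = G.degMatrix ℝ + G.adjMatrix ℝ := by
  unfold signlessLaplacian degMatrix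
  congr!

theorem dotProduct_signlessLaplacian_mulVec [DecidableRel G.Adj] (x : V → ℝ) :
    x ⬝ᵥ (signlessLaplacian G *ᵥ x) =
      (∑ i, ∑ j, if G.Adj i j then (x i + x j) ^ 2 else 0) / 2 := by
  simp_rw [signlessLaplacian_eq, add_mulVec, dotProduct_add, dotProduct_mulVec_degMatrix,
    dotProduct_mulVec_adjMatrix, ← sum_add_distrib, degree_eq_sum_if_adj, sum_mul, ite_mul,
    one_mul, zero_mul, ← sum_add_distrib, ite_add_ite, add_zero]
  rw [← add_self_div_two (∑ i, ∑ j, _)]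
  conv_lhs => enter [1, 2, 2, i, 2, j]; rw [if_congr (adj_comm G i j) rfl rfl]
  conv_lhs => enter [1, 2]; rw [Finset.sum_comm]
  simp_rw [← sum_add_distrib, ite_add_ite]
  congr 2 with i
  congr 2 with j
  split_ifs <;> ring

theorem dotProduct_signlessLaplacian_mulVec_signVector_le (F : Finset (Sym2 V))
    (c : (G.deleteEdges F).Coloring (Fin 2)) :
    c.signVector ⬝ᵥ (signlessLaplacian G *ᵥ c.signVector) ≤ 4 * #F := by
  classical
  set K := fromEdgeSet (F : Set (Sym2 V))
  have hterm (i j : V) : (if G.Adj i j then (c.signVector i + c.signVector j) ^ 2 else 0) ≤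
      4 * if K.Adj i j then 1 else 0 := by
    have hnonneg : (0 : ℝ) ≤ 4 * if K.Adj i j then 1 else 0 := by positivity
    by_cases hG : G.Adj i j
    · by_cases hF : s(i, j) ∈ F
      · rw [if_pos hG, if_pos (show K.Adj i j from ⟨hF, hG.ne⟩), mul_one]
        exact c.add_signVector_sq_le i j
      · rw [if_pos hG, c.add_signVector_eq_zero_of_adj (deleteEdges_adj.mpr ⟨hG, hF⟩)]
        simpa using hnonneg
    · rwa [if_neg hG]
  calc c.signVector ⬝ᵥ (signlessLaplacian G *ᵥ c.signVector)
      ≤ (∑ i, ∑ j, 4 * if K.Adj i j then (1 : ℝ) else 0) / 2 := by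
        rw [dotProduct_signlessLaplacian_mulVec]
        gcongr with i _ j
        exact hterm i j
    _ = 4 * #K.edgeFinset := by
        simp_rw [← mul_sum]
        rw [sum_sum_ite_adj_eq_two_mul_card_edgeFinset]
        ring
    _ ≤ 4 * #F := by
        gcongr
        exact edgeFinset_fromEdgeSet_subset F

end SimpleGraph

theorem qmin_le_makeBipartite_general {n : ℕ} (G : SimpleGraph (Fin n))
    (F : Finset (Sym2 (Fin n)))
    (hbip : (G.deleteEdges ↑F).Colorable 2) :
    qmin G * n / 4 ≤ F.card := by
  obtain ⟨c⟩ := hbip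
  have hrayleigh := (signlessLaplacian_isHermitian G).iInf_eigenvalues_mul_dotProduct_le
    c.signVector
  rw [c.dotProduct_signVector_self, Fintype.card_fin] at hrayleigh
  have hform := G.dotProduct_signlessLaplacian_mulVec_signVector_le F c
  unfold qmin
  linarith

/-- If removing the edge set `F` from `G` leaves a bipartite graph
(i.e. a 2-colorable graph), then `|F| ≥ qmin(G)·n/4`. -/
theorem qmin_le_makeBipartite {n : ℕ} (G : SimpleGraph (Fin n))
    (F : Finset (Sym2 (Fin n))) (hF : ↑F ⊆ G.edgeSet)
    (hbip : (G.deleteEdges ↑F).Colorable 2) :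
    qmin G * n / 4 ≤ F.card :=
  qmin_le_makeBipartite_general G F hbip
end

section
/- If G is a K_4-free graph of order n, then the smallest signless Laplacian eigenvalue satisfies q_min(G) ≤ 4n/9. -/
open Matrix SimpleGraph Finset

/-!
Write `q = q_min(G)`, `D = ∑ deg`, `P = ∑ deg²` and `M = ∑_v (A³)ᵥᵥ` (six times the number of
triangles), and test the Rayleigh bound `q ‖x‖² ≤ xᵀ Q x` on three kinds of vectors. Unit vectors
give `q ≤ deg v`, so if `q > 4n/9` every degree is positive. The vectors `1 - 2·1_{N(x)}`, summed
over `x`, give `q n² ≤ 2nD - 4P + 4M`. For an edge `vy`, the vector `1_{N(v)} - 2·1_{N(v) ∩ N(y)}`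
has a small quadratic form because `N(v) ∩ N(y)` is independent in a `K₄`-free graph; averaging
over `y ∈ N(v)`, then summing over `v` with two Cauchy–Schwarz steps, gives
`q D ≤ P + M - 4M²/P`. Together with `D² ≤ nP` these two inequalities force `q ≤ 4n/9`.
-/

theorem Matrix.IsHermitian.iInf_eigenvalues_mul_dotProduct_self_le {n : Type*} [Fintype n]
    [DecidableEq n] {A : Matrix n n ℝ} (hA : A.IsHermitian) (x : n → ℝ) :
    (⨅ i, hA.eigenvalues i) * (x ⬝ᵥ x) ≤ x ⬝ᵥ A *ᵥ x := by
  set c := ⨅ i, hA.eigenvalues i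
  have hpsd : (A - c • 1).PosSemidef := by
    have hdiag : diagonal (fun i => hA.eigenvalues i - c) =
        diagonal (RCLike.ofReal ∘ hA.eigenvalues) - c • 1 := by
      simp [smul_one_eq_diagonal, diagonal_sub]
    rw [hA.spectral_theorem, ← map_one (Unitary.conjStarAlgAut ℝ _ hA.eigenvectorUnitary),
      ← map_smul, ← map_sub, ← hdiag, Unitary.conjStarAlgAut_apply,
      Unitary.isUnit_coe.posSemidef_star_right_conjugate_iff, posSemidef_diagonal_iff]
    exact fun i => sub_nonneg.2 (ciInf_le (Finite.bddBelow_range _) i)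
  simpa [sub_mulVec, dotProduct_sub, smul_mulVec, dotProduct_smul] using
    hpsd.dotProduct_mulVec_nonneg x

namespace SimpleGraph

theorem CliqueFree.not_adj_of_mem_commonNeighbors {V : Type*} [DecidableEq V]
    {G : SimpleGraph V} (hG : G.CliqueFree 4) {v y w u : V} (hvy : G.Adj v y)
    (hw : w ∈ G.commonNeighbors v y) (hu : u ∈ G.commonNeighbors v y) : ¬ G.Adj w u := by
  rw [mem_commonNeighbors] at hw hu
  exact fun hwu => hG _ ((is3Clique_triple_iff.2 ⟨hw.2, hu.2, hwu⟩).insert (a := v)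
    (by simp [hvy, hw.1, hu.1]))

section Fintype

variable {V : Type*} [Fintype V] (G : SimpleGraph V) [DecidableRel G.Adj]

theorem adjMatrix_dotProduct_mulVec_comm (x y : V → ℝ) :
    x ⬝ᵥ G.adjMatrix ℝ *ᵥ y = y ⬝ᵥ G.adjMatrix ℝ *ᵥ x := by
  rw [← dotProduct_transpose_mulVec, transpose_adjMatrix]

theorem adjMatrix_mulVec_one : G.adjMatrix ℝ *ᵥ 1 = fun v => (G.degree v : ℝ) := by
  ext v
  simp

noncomputable def neighborDegreeSum (v : V) : ℝ := ∑ w ∈ G.neighborFinset v, (G.degree w : ℝ)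

/-- `(A³)ᵥᵥ`: the number of ordered pairs of adjacent neighbours of `v`, i.e. twice the number of
triangles through `v`. -/
noncomputable def neighborhoodAdjPairs (v : V) : ℝ :=
  G.adjMatrix ℝ v ⬝ᵥ G.adjMatrix ℝ *ᵥ G.adjMatrix ℝ v

theorem sum_neighborDegreeSum : ∑ v, G.neighborDegreeSum v = ∑ v, (G.degree v : ℝ) ^ 2 := by
  calc ∑ v, G.neighborDegreeSum v = 1 ⬝ᵥ G.adjMatrix ℝ *ᵥ fun w => (G.degree w : ℝ) := by
        simp [neighborDegreeSum, one_dotProduct]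
    _ = ∑ v, (G.degree v : ℝ) ^ 2 := by
        rw [adjMatrix_dotProduct_mulVec_comm, adjMatrix_mulVec_one]
        simp [dotProduct, sq]

theorem one_sub_two_smul_adjMatrix_dotProduct_mulVec (v : V) :
    (1 - (2 : ℝ) • G.adjMatrix ℝ v) ⬝ᵥ G.adjMatrix ℝ *ᵥ (1 - (2 : ℝ) • G.adjMatrix ℝ v) =
      ∑ w, (G.degree w : ℝ) - 4 * G.neighborDegreeSum v + 4 * G.neighborhoodAdjPairs v := by
  simp only [mulVec_sub, dotProduct_sub, sub_dotProduct, mulVec_smul, dotProduct_smul,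
    smul_dotProduct]
  rw [adjMatrix_dotProduct_mulVec_comm G 1 (G.adjMatrix ℝ v), adjMatrix_mulVec_one]
  simp [neighborDegreeSum, neighborhoodAdjPairs, one_dotProduct]
  ring

theorem sum_neighborFinset_commonNeighbors_dotProduct_mulVec (v : V) :
    ∑ y ∈ G.neighborFinset v,
        (G.adjMatrix ℝ v * G.adjMatrix ℝ y) ⬝ᵥ G.adjMatrix ℝ *ᵥ G.adjMatrix ℝ v =
      G.adjMatrix ℝ v ⬝ᵥ (G.adjMatrix ℝ *ᵥ G.adjMatrix ℝ v) ^ 2 := by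
  set c := G.adjMatrix ℝ *ᵥ G.adjMatrix ℝ v
  have hswap : ∀ y, (G.adjMatrix ℝ v * G.adjMatrix ℝ y) ⬝ᵥ c =
      (G.adjMatrix ℝ *ᵥ (G.adjMatrix ℝ v * c)) y := fun y => by
    simp only [mulVec, dotProduct, Pi.mul_apply]
    exact sum_congr rfl fun w _ => by ring
  simp only [hswap, ← adjMatrix_mulVec_apply]
  change G.adjMatrix ℝ v ⬝ᵥ G.adjMatrix ℝ *ᵥ (G.adjMatrix ℝ v * c) = _
  rw [adjMatrix_dotProduct_mulVec_comm]
  simp only [dotProduct, Pi.mul_apply, Pi.pow_apply, sq, c]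
  exact sum_congr rfl fun w _ => by ring

end Fintype

section qmin

variable {V : Type} [Fintype V] [DecidableEq V] {G : SimpleGraph V} [DecidableRel G.Adj]

variable (G) in
theorem qmin_mul_dotProduct_self_le (x : V → ℝ) :
    qmin G * (x ⬝ᵥ x) ≤ ∑ v, (G.degree v : ℝ) * x v ^ 2 + x ⬝ᵥ G.adjMatrix ℝ *ᵥ x := by
  convert (signlessLaplacian_isHermitian G).iInf_eigenvalues_mul_dotProduct_self_le x using 1
  · rfl
  -- `signlessLaplacian` uses `Classical.decRel`; `congr!` matches it with the given instance
  unfold signlessLaplacian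
  rw [add_mulVec, dotProduct_add]
  congr 1
  · simp only [dotProduct, mulVec_diagonal]
    refine sum_congr rfl fun v _ => ?_
    rw [mul_left_comm, ← sq]
    congr!
  · congr!

theorem qmin_le_degree (v : V) : qmin G ≤ G.degree v := by
  simpa [Pi.single_apply] using qmin_mul_dotProduct_self_le G (Pi.single v 1)

theorem qmin_mul_card_le (v : V) :
    qmin G * Fintype.card V ≤
      2 * ∑ w, (G.degree w : ℝ) - 4 * G.neighborDegreeSum v + 4 * G.neighborhoodAdjPairs v := by
  have hsq : ∀ w, (1 - (2 : ℝ) • G.adjMatrix ℝ v : V → ℝ) w ^ 2 = 1 := fun w => by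
    by_cases h : G.Adj v w <;> norm_num [adjMatrix_apply, h]
  have := qmin_mul_dotProduct_self_le G (1 - (2 : ℝ) • G.adjMatrix ℝ v)
  rw [one_sub_two_smul_adjMatrix_dotProduct_mulVec] at this
  simp only [dotProduct, ← sq, hsq, mul_one, sum_const, card_univ, nsmul_eq_mul] at this
  linarith

theorem qmin_mul_card_sq_le :
    qmin G * Fintype.card V ^ 2 ≤ 2 * Fintype.card V * ∑ v, (G.degree v : ℝ) -
      4 * ∑ v, (G.degree v : ℝ) ^ 2 + 4 * ∑ v, G.neighborhoodAdjPairs v := by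
  have := sum_le_sum fun v (_ : v ∈ univ) => qmin_mul_card_le (G := G) v
  simp only [sum_const, card_univ, sum_add_distrib, sum_sub_distrib, ← mul_sum,
    sum_neighborDegreeSum, nsmul_eq_mul] at this
  linarith

theorem CliqueFree.dotProduct_adjMatrix_mulVec_commonNeighbors_eq_zero (hG : G.CliqueFree 4)
    {v y : V} (hvy : G.Adj v y) :
    (G.adjMatrix ℝ v * G.adjMatrix ℝ y) ⬝ᵥ
      G.adjMatrix ℝ *ᵥ (G.adjMatrix ℝ v * G.adjMatrix ℝ y) = 0 := by
  rw [dotProduct_mulVec_adjMatrix]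
  refine sum_eq_zero fun w _ => sum_eq_zero fun u _ => ?_
  by_cases hwu : G.Adj w u
  · simp only [Pi.mul_apply, adjMatrix_apply, hwu, if_true]
    split_ifs with hvw hyw hvu hyu <;> simp
    exact hG.not_adj_of_mem_commonNeighbors hvy ⟨hvw, hyw⟩ ⟨hvu, hyu⟩ hwu
  · simp [hwu]

theorem qmin_mul_degree_le_of_adj (hG : G.CliqueFree 4) {v y : V} (hvy : G.Adj v y) :
    qmin G * G.degree v ≤ G.neighborDegreeSum v + G.neighborhoodAdjPairs v -
      4 * ((G.adjMatrix ℝ v * G.adjMatrix ℝ y) ⬝ᵥ G.adjMatrix ℝ *ᵥ G.adjMatrix ℝ v) := by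
  set a := G.adjMatrix ℝ v
  set c := a * G.adjMatrix ℝ y
  have hsq : ∀ w, (a - (2 : ℝ) • c) w ^ 2 = a w := fun w => by
    by_cases hvw : G.Adj v w <;> by_cases hyw : G.Adj y w <;> norm_num [a, c, adjMatrix_apply, *]
  have hform : (a - (2 : ℝ) • c) ⬝ᵥ G.adjMatrix ℝ *ᵥ (a - (2 : ℝ) • c) =
      G.neighborhoodAdjPairs v - 4 * (c ⬝ᵥ G.adjMatrix ℝ *ᵥ a) := by
    simp only [mulVec_sub, dotProduct_sub, sub_dotProduct, mulVec_smul, dotProduct_smul,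
      smul_dotProduct]
    rw [adjMatrix_dotProduct_mulVec_comm G a c,
      hG.dotProduct_adjMatrix_mulVec_commonNeighbors_eq_zero hvy, neighborhoodAdjPairs]
    simp only [smul_eq_mul]
    ring
  have hnorm : (a - (2 : ℝ) • c) ⬝ᵥ (a - (2 : ℝ) • c) = G.degree v := by
    simp only [dotProduct, ← sq, hsq]
    simp [a, ← card_neighborFinset_eq_degree, neighborFinset_eq_filter]
  have hdiag : ∑ w, (G.degree w : ℝ) * (a - (2 : ℝ) • c) w ^ 2 = G.neighborDegreeSum v := by
    simp only [hsq]
    exact dotProduct_adjMatrix G v _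
  have := qmin_mul_dotProduct_self_le G (a - (2 : ℝ) • c)
  rw [hform, hnorm, hdiag] at this
  linarith

theorem qmin_mul_degree_le_of_cliqueFree (hG : G.CliqueFree 4) {v : V} (hv : 0 < G.degree v) :
    qmin G * G.degree v ≤ G.neighborDegreeSum v + G.neighborhoodAdjPairs v -
      4 * (G.neighborhoodAdjPairs v ^ 2 / G.degree v ^ 2) := by
  set d : ℝ := (G.degree v : ℝ)
  set c := G.adjMatrix ℝ *ᵥ G.adjMatrix ℝ v
  have hd : 0 < d := by simpa [d] using hv
  have havg : d * (qmin G * d) ≤ d * (G.neighborDegreeSum v + G.neighborhoodAdjPairs v) -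
      4 * (G.adjMatrix ℝ v ⬝ᵥ c ^ 2) := by
    have := sum_le_sum fun y hy => qmin_mul_degree_le_of_adj hG ((mem_neighborFinset G v y).1 hy)
    simp only [sum_sub_distrib, ← mul_sum, sum_neighborFinset_commonNeighbors_dotProduct_mulVec,
      sum_const, card_neighborFinset_eq_degree, nsmul_eq_mul] at this
    linarith
  have hcs : G.neighborhoodAdjPairs v ^ 2 ≤ d * (G.adjMatrix ℝ v ⬝ᵥ c ^ 2) := by
    simpa [neighborhoodAdjPairs, d, c] using
      sq_sum_le_card_mul_sum_sq (s := G.neighborFinset v) (f := c)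
  have hratio : G.neighborhoodAdjPairs v ^ 2 / d ^ 2 ≤ G.adjMatrix ℝ v ⬝ᵥ c ^ 2 / d := by
    rw [div_le_div_iff₀ (by positivity) hd]
    nlinarith
  have hq : 4 * (G.adjMatrix ℝ v ⬝ᵥ c ^ 2) / d ≤
      G.neighborDegreeSum v + G.neighborhoodAdjPairs v - qmin G * d := by
    rw [div_le_iff₀ hd]
    linarith
  rw [mul_div_assoc] at hq
  linarith

theorem qmin_mul_sum_degree_le_of_cliqueFree (hG : G.CliqueFree 4) (hδ : ∀ v, 0 < G.degree v) :
    qmin G * ∑ v, (G.degree v : ℝ) ≤ ∑ v, (G.degree v : ℝ) ^ 2 + ∑ v, G.neighborhoodAdjPairs v -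
      4 * ((∑ v, G.neighborhoodAdjPairs v) ^ 2 / ∑ v, (G.degree v : ℝ) ^ 2) := by
  have hsum := sum_le_sum fun v (_ : v ∈ univ) => qmin_mul_degree_le_of_cliqueFree hG (hδ v)
  have hcs := sq_sum_div_le_sum_sq_div univ G.neighborhoodAdjPairs
    (g := fun v => (G.degree v : ℝ) ^ 2) fun v _ => by have := hδ v; positivity
  simp only [sum_sub_distrib, sum_add_distrib, ← mul_sum, sum_neighborDegreeSum] at hsum
  linarith

end qmin

end SimpleGraph

/- `P + N³/9 - ND/2` is the value of `M` at which the bound `q N² ≤ 2ND - 4P + 4M` is tight for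
`q = 4N/9`. -/
theorem le_eight_mul_threshold {N D P : ℝ} (hN : 0 < N) (hDP : D ^ 2 ≤ N * P) :
    P ≤ 8 * (P + N ^ 3 / 9 - N * D / 2) := by
  nlinarith [sq_nonneg (7 * D - 2 * N ^ 2), pow_pos hN 4]

theorem threshold_quadratic_le {N D P : ℝ} (hN : 0 < N) (hD : 0 ≤ D) (hDP : D ^ 2 ≤ N * P) :
    P ^ 2 + (P + N ^ 3 / 9 - N * D / 2) * P - 4 * (P + N ^ 3 / 9 - N * D / 2) ^ 2 ≤
      4 * N / 9 * D * P := by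
  -- the gap is a quadratic in `P`, increasing for `P ≥ D²/N` and nonnegative at `P = D²/N`
  have hslope : 0 ≤ 4 * D ^ 2 + (7 * N ^ 3 / 9 - 55 * N * D / 18) * N := by
    nlinarith [sq_nonneg (144 * D - 55 * N ^ 2), pow_pos hN 4]
  have hbase : 0 ≤ 2 * D ^ 4 - 55 / 18 * N ^ 2 * D ^ 3 + 16 / 9 * N ^ 4 * D ^ 2
      - 4 / 9 * N ^ 6 * D + 4 / 81 * N ^ 8 := by
    nlinarith [sq_nonneg (18 * D ^ 2 - 55 / 4 * N ^ 2 * D + 1583 / 576 * N ^ 4),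
      mul_nonneg (pow_nonneg hN.le 6) hD, pow_pos hN 8]
  have hgap : 0 ≤ N * P - D ^ 2 := by linarith
  nlinarith [mul_nonneg hslope hgap, sq_nonneg (N * P - D ^ 2), pow_pos hN 2]

theorem le_four_mul_div_nine_of_spectral_bounds {N D P M q : ℝ} (hN : 0 < N) (hD : 0 < D)
    (hDP : D ^ 2 ≤ N * P) (h₁ : q * N ^ 2 ≤ 2 * N * D - 4 * P + 4 * M)
    (h₂ : q * D ≤ P + M - 4 * (M ^ 2 / P)) : q ≤ 4 * N / 9 := by
  by_contra! hq
  have hP : 0 < P := by nlinarith [pow_pos hD 2]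
  have h8 := le_eight_mul_threshold hN hDP
  have hthr := threshold_quadratic_le hN hD.le hDP
  set M₀ := P + N ^ 3 / 9 - N * D / 2 with hM₀
  have hM : M₀ ≤ M := by nlinarith [mul_lt_mul_of_pos_left hq (pow_pos hN 2)]
  have hdecr : P ^ 2 + M * P - 4 * M ^ 2 ≤ P ^ 2 + M₀ * P - 4 * M₀ ^ 2 := by
    nlinarith [mul_nonneg (sub_nonneg.2 hM) (by linarith : 0 ≤ 4 * (M + M₀) - P)]
  have h₂' : q * D * P ≤ P ^ 2 + M * P - 4 * M ^ 2 := by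
    have := mul_le_mul_of_nonneg_right h₂ hP.le
    rwa [sub_mul, mul_assoc 4, div_mul_cancel₀ _ hP.ne', add_mul, ← sq] at this
  have hlt : 4 * N / 9 * D * P < q * D * P := by gcongr
  linarith

/-- If `G` is a `K₄`-free graph of order `n`, then `qmin G ≤ 4n/9`. -/
theorem qmin_le_of_K4Free {n : ℕ} (G : SimpleGraph (Fin n))
    (hG : G.CliqueFree 4) :
    qmin G ≤ 4 * n / 9 := by
  classical
  by_contra! hq
  have hpos : 0 < qmin G := lt_of_le_of_lt (by positivity) hq
  have hδ : ∀ v, 0 < G.degree v := fun v => by exact_mod_cast hpos.trans_le (qmin_le_degree v)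
  have hn : 0 < n := Nat.pos_of_ne_zero fun h => by subst h; simp [qmin] at hpos
  have hD : 0 < ∑ v, (G.degree v : ℝ) :=
    sum_pos (fun v _ => by exact_mod_cast hδ v) ⟨⟨0, hn⟩, mem_univ _⟩
  have hDP : (∑ v, (G.degree v : ℝ)) ^ 2 ≤ n * ∑ v, (G.degree v : ℝ) ^ 2 := by
    simpa using sq_sum_le_card_mul_sum_sq (s := univ) (f := fun v => (G.degree v : ℝ))
  have h₁ := qmin_mul_card_sq_le (G := G)
  rw [Fintype.card_fin] at h₁
  exact hq.not_ge (le_four_mul_div_nine_of_spectral_bounds (by positivity) hD hDP h₁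
    (qmin_mul_sum_degree_le_of_cliqueFree hG hδ))
end

section
/- Let t ≥ 2 and let G be a graph of order n with vertex degrees d_1, …, d_n, and let q̄_1, …, q̄_n be the signless Laplacian eigenvalues of the complement Ḡ of G. Then the multiset of signless Laplacian eigenvalues of the complement of the blowup, \overline{G^(t)}, equals { t·q̄_1 + 2(t−1), …, t·q̄_n + 2(t−1) } together with each of tn − td_1 − 2, …, tn − td_n − 2 repeated t−1 times. -/
open Matrix SimpleGraph Finset

/-- The multiset of signless Laplacian eigenvalues (with multiplicity) of `G`. -/
noncomputable def qSpectrum {V : Type} [Fintype V] [DecidableEq V]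
    (G : SimpleGraph V) : Multiset ℝ :=
  Finset.univ.val.map (signlessLaplacian_isHermitian G).eigenvalues

/-- The blowup `G^(t)`: each vertex `u` of `G` is replaced by `t` independent vertices,
and each edge by a complete bipartite graph between the corresponding sets. -/
def blowup {V : Type} (G : SimpleGraph V) (t : ℕ) : SimpleGraph (V × Fin t) :=
  G.comap Prod.fst

/-- The degree of a vertex, as a real number. -/
noncomputable def degR {V : Type} [Fintype V] (G : SimpleGraph V) (v : V) : ℝ :=
  letI := Classical.decRel G.Adj
  (G.degree v : ℝ)

/-!
In the complement of `G^(t)` the vertex `(u, i)` is adjacent to every other vertex of its own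
fibre and to the whole fibre of each `Ḡ`-neighbour of `u`, so with `J` the all-ones `t × t` matrix
`Q(\overline{G^(t)}) = M ⊗ I + (A(Ḡ) + I) ⊗ J`, where `M = t D(Ḡ) + (t - 2) I`.
Conjugating by `I ⊗ F`, where the columns of `F` form an eigenbasis of `J`, makes this matrix
block diagonal: one block `M + t (A(Ḡ) + I) = t Q(Ḡ) + 2(t - 1) I` for the eigenvalue `t` of `J`,
and `t - 1` blocks `M = diag(tn - t dᵢ - 2)` for the eigenvalue `0`. The spectra are then read off
the characteristic polynomials.
-/

open Kronecker Polynomial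

namespace Matrix

section charpoly
variable {R : Type*} [CommRing R] {n o : Type*} [Fintype n] [DecidableEq n]
  [Fintype o] [DecidableEq o]

theorem charmatrix_blockDiagonal (M : o → Matrix n n R) :
    charmatrix (blockDiagonal M) = blockDiagonal fun k => charmatrix (M k) := by
  have hX : (diagonal fun _ : n × o => (X : R[X])) = blockDiagonal fun _ => diagonal fun _ => X :=
    (blockDiagonal_diagonal fun _ _ => X).symm
  simp only [charmatrix, scalar_apply, RingHom.mapMatrix_apply, hX,
    blockDiagonal_map _ _ (map_zero _), ← blockDiagonal_sub]
  rfl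

theorem charpoly_blockDiagonal (M : o → Matrix n n R) :
    (blockDiagonal M).charpoly = ∏ k, (M k).charpoly := by
  rw [charpoly, charmatrix_blockDiagonal, det_blockDiagonal]
  rfl

theorem charpoly_eq_of_mul_eq_mul {A B P : Matrix n n R} (hP : IsUnit P)
    (h : A * P = P * B) : A.charpoly = B.charpoly := by
  obtain ⟨U, rfl⟩ := hP
  rw [← charpoly_units_conj' U A, mul_assoc, h, ← mul_assoc, ← coe_units_inv, Units.inv_mul,
    one_mul]

theorem roots_charpoly_diagonal [IsDomain R] (d : n → R) :
    (diagonal d).charpoly.roots = Finset.univ.val.map d := by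
  rw [charpoly_diagonal, roots_prod _ _ (prod_ne_zero_iff.mpr fun i _ => X_sub_C_ne_zero (d i))]
  simp

end charpoly

theorem IsHermitian.roots_charpoly_smul_add_smul_one {𝕜 n : Type*} [RCLike 𝕜] [Fintype n]
    [DecidableEq n] {A : Matrix n n 𝕜} (hA : A.IsHermitian) (a b : ℝ) :
    (a • A + b • (1 : Matrix n n 𝕜)).charpoly.roots =
      Finset.univ.val.map fun i => ((a * hA.eigenvalues i + b : ℝ) : 𝕜) := by
  have hcfc : cfc (fun x => a * x + b) A = a • A + b • 1 := by
    rw [cfc_add .., cfc_const_mul .., cfc_id' .., cfc_const .., Algebra.algebraMap_eq_smul_one]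
  rw [← hcfc, hA.charpoly_cfc_eq, ← charpoly_diagonal, roots_charpoly_diagonal]

section allOnes
variable {K : Type*} [Field K] {n m : Type*} [Fintype n] [DecidableEq n] [Fintype m]
  [DecidableEq m]

/-- Its columns form an eigenbasis of the all-ones matrix: the all-ones vector in column `z`
and `eₖ - e_z` in column `k ≠ z`. -/
def allOnesDiagonalizer (z : m) : Matrix m m K :=
  1 + vecMulVec 1 (Pi.single z 1) - vecMulVec (Pi.single z 1) 1

theorem isUnit_allOnesDiagonalizer (z : m) (hm : (Fintype.card m : K) ≠ 0) :
    IsUnit (allOnesDiagonalizer z : Matrix m m K) := by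
  rw [isUnit_iff_isUnit_det]
  refine isUnit_det_of_right_inverse (B := 1 - vecMulVec (Pi.single z 1) (Pi.single z 1)
      + (2 / (Fintype.card m : K)) • vecMulVec (Pi.single z 1) 1
      - (1 / (Fintype.card m : K)) • vecMulVec 1 1) ?_
  simp only [allOnesDiagonalizer, Matrix.mul_add, Matrix.mul_sub, Matrix.add_mul,
    Matrix.sub_mul, Matrix.one_mul, Matrix.mul_smul, vecMulVec_mul_vecMulVec, one_dotProduct_one,
    single_dotProduct, dotProduct_single, Pi.one_apply, Pi.single_eq_same, mul_one,
    vecMulVec_smul, one_smul]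
  match_scalars <;> (try field_simp) <;> ring

theorem allOnes_mul_allOnesDiagonalizer (z : m) :
    vecMulVec 1 1 * allOnesDiagonalizer z =
      allOnesDiagonalizer z * diagonal (Pi.single z (Fintype.card m : K)) := by
  ext i j
  simp only [allOnesDiagonalizer, mul_diagonal, Matrix.mul_add, Matrix.mul_sub,
    vecMulVec_mul_vecMulVec, one_dotProduct_one, dotProduct_single, Pi.one_apply, mul_one,
    one_smul, add_sub_cancel_left]
  simp only [sub_apply, add_apply, vecMulVec_apply, Pi.single_apply, one_apply, Pi.one_apply]
  split_ifs <;> simp_all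

theorem charpoly_kronecker_one_add_kronecker_allOnes (M N : Matrix n n K)
    (hm : (Fintype.card m : K) ≠ 0) :
    (M ⊗ₖ (1 : Matrix m m K) + N ⊗ₖ vecMulVec 1 1).charpoly =
      (M + (Fintype.card m : K) • N).charpoly * M.charpoly ^ (Fintype.card m - 1) := by
  obtain ⟨z⟩ : Nonempty m := Fintype.card_pos_iff.mp <| Nat.pos_of_ne_zero <| by
    rintro h; simp [h] at hm
  have hblock : M ⊗ₖ 1 + N ⊗ₖ diagonal (Pi.single z (Fintype.card m : K)) =
      blockDiagonal fun k => M + (Pi.single z (Fintype.card m : K) : m → K) k • N := by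
    simp only [kronecker_one, kronecker_diagonal, ← blockDiagonal_add, op_smul_eq_smul]
    rfl
  have hF : IsUnit ((1 : Matrix n n K) ⊗ₖ allOnesDiagonalizer z) := by
    rw [isUnit_iff_isUnit_det, det_kronecker, det_one, one_pow, one_mul]
    exact ((isUnit_iff_isUnit_det _).mp (isUnit_allOnesDiagonalizer z hm)).pow _
  have hconj : (M ⊗ₖ 1 + N ⊗ₖ vecMulVec 1 1) * (1 ⊗ₖ allOnesDiagonalizer z) =
      (1 ⊗ₖ allOnesDiagonalizer z) *
        (M ⊗ₖ 1 + N ⊗ₖ diagonal (Pi.single z (Fintype.card m : K))) := by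
    simp only [Matrix.add_mul, Matrix.mul_add, ← mul_kronecker_mul, Matrix.one_mul,
      Matrix.mul_one, allOnes_mul_allOnesDiagonalizer]
  rw [charpoly_eq_of_mul_eq_mul hF hconj, hblock, charpoly_blockDiagonal,
    Fintype.prod_eq_mul_prod_compl z, Pi.single_eq_same]
  congr 1
  rw [Finset.prod_congr rfl fun k hk => by
      rw [Pi.single_eq_of_ne (notMem_singleton.mp (mem_compl.mp hk)), zero_smul, add_zero],
    prod_const, card_compl, card_singleton]

end allOnes

end Matrix

section graph
variable {V : Type} [Fintype V]

theorem degR_eq_degree (G : SimpleGraph V) [DecidableRel G.Adj] (v : V) :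
    degR G v = G.degree v := by
  unfold degR
  congr!

variable [DecidableEq V]

theorem cast_degree_compl {R : Type*} [Ring R] (G : SimpleGraph V) [DecidableRel G.Adj]
    (v : V) : (Gᶜ.degree v : R) = Fintype.card V - 1 - G.degree v := by
  have hlt := G.degree_lt_card_verts v
  rw [degree_compl, Nat.sub_sub, Nat.cast_sub (by omega), Nat.cast_add, Nat.cast_one]
  abel

theorem signlessLaplacian_eq_diagonal_add_adjMatrix (H : SimpleGraph V) [DecidableRel H.Adj] :
    signlessLaplacian H = diagonal (fun v => (H.degree v : ℝ)) + H.adjMatrix ℝ := by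
  unfold signlessLaplacian
  congr!

theorem qSpectrum_eq_roots_charpoly (H : SimpleGraph V) :
    qSpectrum H = (signlessLaplacian H).charpoly.roots := by
  rw [(signlessLaplacian_isHermitian H).roots_charpoly_eq_eigenvalues]
  rfl

end graph

section blowup
variable {V : Type} (G : SimpleGraph V) (t : ℕ)

@[simp]
theorem blowup_adj {a b : V × Fin t} : (blowup G t).Adj a b ↔ G.Adj a.1 b.1 :=
  Iff.rfl

variable [DecidableEq V] [DecidableRel G.Adj] [DecidableRel (blowup G t)ᶜ.Adj]

theorem adjMatrix_compl_blowup (α : Type*) [Ring α] :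
    (blowup G t)ᶜ.adjMatrix α = (Gᶜ.adjMatrix α + 1) ⊗ₖ vecMulVec 1 1 - 1 := by
  ext ⟨u, i⟩ ⟨v, j⟩
  simp only [adjMatrix_apply, compl_adj, blowup_adj, Matrix.sub_apply, kroneckerMap_apply,
    Matrix.add_apply, vecMulVec_apply, Pi.one_apply, mul_one, one_apply, Prod.mk.injEq]
  by_cases huv : u = v
  · subst huv
    by_cases hij : i = j <;> simp [hij]
  · by_cases hG : G.Adj u v <;> simp [huv, hG]

variable [Fintype V]

theorem neighborFinset_compl_blowup (a : V × Fin t) :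
    (blowup G t)ᶜ.neighborFinset a = (insert a.1 (Gᶜ.neighborFinset a.1) ×ˢ univ).erase a := by
  ext b
  simp only [mem_neighborFinset, compl_adj, blowup_adj, mem_erase, mem_product, mem_insert,
    mem_univ, and_true]
  constructor
  · rintro ⟨hab, hG⟩
    exact ⟨Ne.symm hab, (eq_or_ne b.1 a.1).imp id fun h => ⟨h.symm, hG⟩⟩
  · rintro ⟨hba, h | ⟨-, hG⟩⟩
    · exact ⟨Ne.symm hba, h ▸ G.irrefl⟩
    · exact ⟨Ne.symm hba, hG⟩

theorem degree_compl_blowup_add_one (a : V × Fin t) :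
    (blowup G t)ᶜ.degree a + 1 = t * (Gᶜ.degree a.1 + 1) := by
  rw [← card_neighborFinset_eq_degree, neighborFinset_compl_blowup,
    card_erase_add_one (mem_product.mpr ⟨mem_insert_self _ _, mem_univ _⟩), card_product,
    card_insert_of_notMem (Gᶜ.notMem_neighborFinset_self _), card_univ, Fintype.card_fin,
    card_neighborFinset_eq_degree, mul_comm]

theorem signlessLaplacian_compl_blowup :
    signlessLaplacian (blowup G t)ᶜ =
      ((t : ℝ) • diagonal (fun v => (Gᶜ.degree v : ℝ)) + ((t : ℝ) - 2) • 1) ⊗ₖ 1 +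
        (Gᶜ.adjMatrix ℝ + 1) ⊗ₖ vecMulVec 1 1 := by
  rw [signlessLaplacian_eq_diagonal_add_adjMatrix, adjMatrix_compl_blowup, add_sub_left_comm,
    add_comm]
  congr 1
  ext ⟨u, i⟩ ⟨v, j⟩
  have hdeg : ((blowup G t)ᶜ.degree (u, i) : ℝ) = t * (Gᶜ.degree u + 1) - 1 := by
    rw [eq_sub_iff_add_eq]
    exact_mod_cast degree_compl_blowup_add_one G t (u, i)
  by_cases huv : u = v
  · subst huv
    by_cases hij : i = j
    · subst hij; simp [hdeg]; ring
    · simp [hij]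
  · simp [huv]

end blowup

/-- For `t ≥ 2`, the signless Laplacian eigenvalues of the complement
of the blowup `G^(t)` are `t·q̄ᵢ + 2(t-1)` for the signless Laplacian eigenvalues
`q̄₁, …, q̄ₙ` of the complement of `G`, together with each of `tn - tdᵢ - 2` repeated
`t - 1` times. -/
theorem qSpectrum_compl_blowup {V : Type} [Fintype V] [DecidableEq V]
    (G : SimpleGraph V) (t : ℕ) (ht : 2 ≤ t) :
    qSpectrum ((blowup G t)ᶜ) =
      Finset.univ.val.map
        (fun i => (t : ℝ) * (signlessLaplacian_isHermitian Gᶜ).eigenvalues i +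
          2 * ((t : ℝ) - 1)) +
      (t - 1) • Finset.univ.val.map
        (fun v : V => (t : ℝ) * (Fintype.card V) - (t : ℝ) * degR G v - 2) := by
  classical
  have ht0 : (Fintype.card (Fin t) : ℝ) ≠ 0 := by simp; omega
  have hfull : ((t : ℝ) • diagonal (fun v => (Gᶜ.degree v : ℝ)) + ((t : ℝ) - 2) • 1) +
      (t : ℝ) • (Gᶜ.adjMatrix ℝ + 1) =
        (t : ℝ) • signlessLaplacian Gᶜ + (2 * ((t : ℝ) - 1)) • 1 := by
    rw [signlessLaplacian_eq_diagonal_add_adjMatrix]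
    module
  have hdiag : (t : ℝ) • diagonal (fun v => (Gᶜ.degree v : ℝ)) + ((t : ℝ) - 2) • 1 =
      diagonal fun v => (t : ℝ) * Fintype.card V - t * degR G v - 2 := by
    ext u v
    by_cases huv : u = v
    · subst huv; simp [cast_degree_compl, degR_eq_degree]; ring
    · simp [huv]
  rw [qSpectrum_eq_roots_charpoly, signlessLaplacian_compl_blowup,
    charpoly_kronecker_one_add_kronecker_allOnes _ _ ht0, Fintype.card_fin, hfull, hdiag,
    roots_mul ((charpoly_monic _).mul ((charpoly_monic _).pow _)).ne_zero, roots_pow,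
    (signlessLaplacian_isHermitian Gᶜ).roots_charpoly_smul_add_smul_one, roots_charpoly_diagonal]
  rfl
end

section
/- Let n > r ≥ 2. If G is a K_{r+1}-free graph of order n, then the algebraic connectivity satisfies μ_2(G) ≤ n − ⌈n/r⌉, and this bound is attained by the Turán graph T_r(n). -/
open Matrix SimpleGraph Finset

/-- The Laplacian matrix `L(G) = D - A` of a finite simple graph `G`. -/
noncomputable def laplacian {V : Type} [Fintype V] [DecidableEq V]
    (G : SimpleGraph V) : Matrix V V ℝ :=
  letI := Classical.decRel G.Adj
  Matrix.diagonal (fun v => (G.degree v : ℝ)) - G.adjMatrix ℝ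

theorem laplacian_isHermitian {V : Type} [Fintype V] [DecidableEq V]
    (G : SimpleGraph V) : (laplacian G).IsHermitian := by
  letI := Classical.decRel G.Adj
  unfold laplacian
  refine Matrix.IsHermitian.sub (Matrix.isHermitian_diagonal _) ?_
  rw [Matrix.IsHermitian, conjTranspose_eq_transpose_of_trivial]
  exact G.isSymm_adjMatrix

/-- The multiset of Laplacian eigenvalues (with multiplicity) of `G`. -/
noncomputable def lapSpectrum {V : Type} [Fintype V] [DecidableEq V]
    (G : SimpleGraph V) : Multiset ℝ :=
  Finset.univ.val.map (laplacian_isHermitian G).eigenvalues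

/-- The Laplacian eigenvalues of `G`, sorted in ascending order. -/
noncomputable def lapEigsSorted {V : Type} [Fintype V] [DecidableEq V]
    (G : SimpleGraph V) : List ℝ :=
  Multiset.sort (Finset.univ.val.map (laplacian_isHermitian G).eigenvalues) (· ≤ ·)

/-- The algebraic connectivity `μ₂(G)`: the second smallest Laplacian eigenvalue. -/
noncomputable def mu2 {V : Type} [Fintype V] [DecidableEq V]
    (G : SimpleGraph V) : ℝ :=
  (lapEigsSorted G).getD 1 0

/-!
Both bounds compare `μ₂` with Rayleigh quotients on subspaces: if the quadratic form of a
symmetric matrix is at most `c‖x‖²` on a `k`-dimensional subspace, at least `k` eigenvalues are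
`≤ c`, because that subspace meets the span of the eigenvectors with eigenvalues `> c` only in `0`.

Upper bound: a `K_{r+1}`-free graph has a vertex `v` with at least `⌈n/r⌉` non-neighbours
(counting itself), since otherwise `r` steps of a greedy search would find an `(r+1)`-clique. With
`T` the other non-neighbours of `v`, the vector equal to `|T|` at `v`, `0` on the neighbours and
`-1` on `T` is orthogonal to `1` and has Rayleigh quotient at most `deg v ≤ n - ⌈n/r⌉`; together
with the kernel vector `1` it spans a plane on which the quadratic form is at most `deg v ‖x‖²`.

Equality for `T_r(n)`: the complement of the Turán graph is a disjoint union of cliques of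
size at most `⌈n/r⌉`, so for `x ⊥ 1` the quadratic form is at least `(n - ⌈n/r⌉)‖x‖²`, and the
hyperplane `1^⊥` forces at most one eigenvalue below `n - ⌈n/r⌉`.
-/

namespace List

variable {α : Type*} [LinearOrder α] {l : List α} {c d : α}

lemma getD_one_le_of_two_le_countP (hl : l.Pairwise (· ≤ ·))
    (h : 2 ≤ l.countP (· ≤ c)) : l.getD 1 d ≤ c := by
  match l, hl, h with
  | [], _, h => simp at h
  | [_], _, h => exact absurd (h.trans countP_le_length) (by simp)
  | a :: b :: t, hl, h =>
    show b ≤ c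
    by_contra! hbc
    have hbt : ∀ x ∈ b :: t, ¬ x ≤ c := fun x hx => by
      rcases mem_cons.mp hx with rfl | hx
      · exact hbc.not_ge
      · exact (hbc.trans_le ((pairwise_cons.mp (pairwise_cons.mp hl).2).1 x hx)).not_ge
    rw [countP_cons, countP_eq_zero.mpr (by simpa using hbt)] at h
    split_ifs at h <;> omega

lemma le_getD_one_of_countP_le_one (hl : l.Pairwise (· ≤ ·)) (hlen : 2 ≤ l.length)
    (h : l.countP (· < c) ≤ 1) : c ≤ l.getD 1 d := by
  match l, hl, hlen, h with
  | a :: b :: t, hl, _, h =>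
    show c ≤ b
    by_contra! hbc
    have hab : a ≤ b := (pairwise_cons.mp hl).1 b mem_cons_self
    simp [hbc, hab.trans_lt hbc] at h

end List

namespace Matrix.IsHermitian

variable {V : Type*} [Fintype V] [DecidableEq V] {A : Matrix V V ℝ} (hA : A.IsHermitian)

lemma dotProduct_eigenvectorBasis (i j : V) :
    ⇑(hA.eigenvectorBasis i) ⬝ᵥ ⇑(hA.eigenvectorBasis j) = if i = j then 1 else 0 := by
  simpa [EuclideanSpace.inner_eq_star_dotProduct, dotProduct_comm] using
    orthonormal_iff_ite.mp hA.eigenvectorBasis.orthonormal i j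

lemma sum_dotProduct_eigenvectorBasis_smul (x : V → ℝ) :
    ∑ i, (⇑(hA.eigenvectorBasis i) ⬝ᵥ x) • ⇑(hA.eigenvectorBasis i) = x := by
  have := congrArg WithLp.ofLp (hA.eigenvectorBasis.sum_repr' (WithLp.toLp 2 x))
  simpa [EuclideanSpace.inner_eq_star_dotProduct, dotProduct_comm] using this

lemma dotProduct_self_eq_sum (x : V → ℝ) :
    x ⬝ᵥ x = ∑ i, (⇑(hA.eigenvectorBasis i) ⬝ᵥ x) ^ 2 := by
  nth_rw 1 [← hA.sum_dotProduct_eigenvectorBasis_smul x]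
  simp [sum_dotProduct, sq]

lemma dotProduct_mulVec_self_eq_sum (x : V → ℝ) :
    x ⬝ᵥ (A *ᵥ x) = ∑ i, hA.eigenvalues i * (⇑(hA.eigenvectorBasis i) ⬝ᵥ x) ^ 2 := by
  nth_rw 2 [← hA.sum_dotProduct_eigenvectorBasis_smul x]
  simp [mulVec_sum, mulVec_smul, hA.mulVec_eigenvectorBasis, dotProduct_comm x, sum_dotProduct,
    sq, mul_left_comm]

lemma linearIndependent_eigenvectorBasis :
    LinearIndependent ℝ fun i => ⇑(hA.eigenvectorBasis i) :=
  hA.eigenvectorBasis.orthonormal.linearIndependent.map'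
    (WithLp.linearEquiv 2 ℝ (V → ℝ)).toLinearMap (WithLp.linearEquiv 2 ℝ (V → ℝ)).ker

lemma dotProduct_eigenvectorBasis_eq_zero_of_mem_span {s : Set V} {x : V → ℝ}
    (hx : x ∈ Submodule.span ℝ ((fun i => ⇑(hA.eigenvectorBasis i)) '' s)) {j : V} (hj : j ∉ s) :
    ⇑(hA.eigenvectorBasis j) ⬝ᵥ x = 0 := by
  induction hx using Submodule.span_induction with
  | mem y hy =>
    obtain ⟨i, hi, rfl⟩ := hy
    rw [hA.dotProduct_eigenvectorBasis, if_neg (by rintro rfl; exact hj hi)]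
  | zero => exact dotProduct_zero _
  | add y z _ _ hy hz => rw [dotProduct_add, hy, hz, add_zero]
  | smul a y _ hy => rw [dotProduct_smul, hy, smul_zero]

lemma finrank_le_card_of_forall_sum_mul_sq_nonpos (f : V → ℝ) (W : Submodule ℝ (V → ℝ))
    (hW : ∀ x ∈ W, ∑ i, f i * (⇑(hA.eigenvectorBasis i) ⬝ᵥ x) ^ 2 ≤ 0) :
    Module.finrank ℝ W ≤ #{i | f i ≤ 0} := by
  set s : Set V := {i | 0 < f i}
  set U := Submodule.span ℝ ((fun i => ⇑(hA.eigenvectorBasis i)) '' s) with hUdef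
  have hU : Module.finrank ℝ U = #{i | 0 < f i} := by
    rw [hUdef, Set.image_eq_range]
    exact (finrank_span_eq_card
      (hA.linearIndependent_eigenvectorBasis.comp _ Subtype.val_injective)).trans
      (Fintype.card_subtype _)
  have hWU : W ⊓ U = ⊥ := by
    refine (Submodule.eq_bot_iff _).mpr fun x ⟨hxW, hxU⟩ => ?_
    have hcoord : ∀ j, f j ≤ 0 → ⇑(hA.eigenvectorBasis j) ⬝ᵥ x = 0 := fun j hj =>
      hA.dotProduct_eigenvectorBasis_eq_zero_of_mem_span hxU (not_lt.mpr hj)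
    have hterm : ∀ i, 0 ≤ f i * (⇑(hA.eigenvectorBasis i) ⬝ᵥ x) ^ 2 := fun i => by
      rcases le_or_gt (f i) 0 with hi | hi
      · simp [hcoord i hi]
      · positivity
    have hzero := (Finset.sum_eq_zero_iff_of_nonneg fun i _ => hterm i).mp
      ((hW x hxW).antisymm (Finset.sum_nonneg fun i _ => hterm i))
    rw [← hA.sum_dotProduct_eigenvectorBasis_smul x]
    refine Finset.sum_eq_zero fun i _ => ?_
    rcases le_or_gt (f i) 0 with hi | hi
    · simp [hcoord i hi]
    · rw [(pow_eq_zero_iff two_ne_zero).mp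
        ((mul_eq_zero.mp (hzero i (mem_univ i))).resolve_left hi.ne'), zero_smul]
  have hdim := Submodule.finrank_sup_add_finrank_inf_eq W U
  rw [hWU, finrank_bot, add_zero, hU] at hdim
  have hle := (W ⊔ U).finrank_le
  have hcard := card_filter_add_card_filter_not (s := univ) (fun i => f i ≤ 0)
  simp only [not_le, card_univ] at hcard
  rw [Module.finrank_fintype_fun_eq_card] at hle
  omega

lemma finrank_le_card_eigenvalues_le {c : ℝ} (W : Submodule ℝ (V → ℝ))
    (hW : ∀ x ∈ W, x ⬝ᵥ (A *ᵥ x) ≤ c * (x ⬝ᵥ x)) :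
    Module.finrank ℝ W ≤ #{i | hA.eigenvalues i ≤ c} := by
  simpa only [sub_nonpos] using hA.finrank_le_card_of_forall_sum_mul_sq_nonpos
    (fun i => hA.eigenvalues i - c) W fun x hx => by
      have := hW x hx
      rw [hA.dotProduct_mulVec_self_eq_sum, hA.dotProduct_self_eq_sum, mul_sum] at this
      simpa only [sub_mul, sum_sub_distrib, sub_nonpos] using this

lemma finrank_le_card_le_eigenvalues {c : ℝ} (W : Submodule ℝ (V → ℝ))
    (hW : ∀ x ∈ W, c * (x ⬝ᵥ x) ≤ x ⬝ᵥ (A *ᵥ x)) :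
    Module.finrank ℝ W ≤ #{i | c ≤ hA.eigenvalues i} := by
  simpa only [sub_nonpos] using hA.finrank_le_card_of_forall_sum_mul_sq_nonpos
    (fun i => c - hA.eigenvalues i) W fun x hx => by
      have := hW x hx
      rw [hA.dotProduct_mulVec_self_eq_sum, hA.dotProduct_self_eq_sum, mul_sum] at this
      simpa only [sub_mul, sum_sub_distrib, sub_nonpos] using this

lemma two_le_card_eigenvalues_le {e y : V → ℝ} {c : ℝ} (he : A *ᵥ e = 0) (he0 : e ≠ 0)
    (hy0 : y ≠ 0) (hey : e ⬝ᵥ y = 0) (hc : 0 ≤ c) (hy : y ⬝ᵥ (A *ᵥ y) ≤ c * (y ⬝ᵥ y)) :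
    2 ≤ #{i | hA.eigenvalues i ≤ c} := by
  have hAt : Aᵀ = A := (conjTranspose_eq_transpose_of_trivial A).symm.trans hA
  have heA : e ⬝ᵥ (A *ᵥ y) = 0 := by
    rw [dotProduct_mulVec, ← mulVec_transpose, hAt, he, zero_dotProduct]
  have hye : y ⬝ᵥ e = 0 := by rw [dotProduct_comm, hey]
  have hind : LinearIndependent ℝ ![e, y] := by
    refine LinearIndependent.pair_iff.mpr fun s t hst => ?_
    have hs : s = 0 := by
      have := congrArg (e ⬝ᵥ ·) hst
      simp only [dotProduct_add, dotProduct_smul, hey, dotProduct_zero, smul_eq_mul,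
        mul_zero, add_zero] at this
      exact (mul_eq_zero.mp this).resolve_right (dotProduct_self_eq_zero.not.mpr he0)
    subst hs
    simpa [hy0] using hst
  calc 2 = Module.finrank ℝ (Submodule.span ℝ (Set.range ![e, y])) := by
        rw [finrank_span_eq_card hind, Fintype.card_fin]
    _ ≤ _ := hA.finrank_le_card_eigenvalues_le _ fun x hx => by
        obtain ⟨a, b, rfl⟩ := Submodule.mem_span_pair.mp (by simpa [Matrix.range_cons] using hx)
        have hee : 0 ≤ e ⬝ᵥ e := Finset.sum_nonneg fun i _ => mul_self_nonneg (e i)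
        simp only [mulVec_add, mulVec_smul, he, smul_zero, add_zero, dotProduct_add, add_dotProduct,
          dotProduct_smul, smul_dotProduct, smul_eq_mul, heA, hey, hye, mul_zero]
        nlinarith [mul_le_mul_of_nonneg_left hy (sq_nonneg a),
          mul_nonneg hc (mul_nonneg (sq_nonneg b) hee)]

lemma card_eigenvalues_lt_le_one {e : V → ℝ} {c : ℝ} (he0 : e ≠ 0)
    (h : ∀ z, e ⬝ᵥ z = 0 → c * (z ⬝ᵥ z) ≤ z ⬝ᵥ (A *ᵥ z)) :
    #{i | hA.eigenvalues i < c} ≤ 1 := by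
  have hW := hA.finrank_le_card_le_eigenvalues (LinearMap.ker (dotProductEquiv ℝ V e)) h
  have hdim := (dotProductEquiv ℝ V e).finrank_ker_add_one_of_ne_zero
    ((dotProductEquiv ℝ V).map_ne_zero_iff.mpr he0)
  have hcard := card_filter_add_card_filter_not (s := univ) (fun i => c ≤ hA.eigenvalues i)
  simp only [not_le, card_univ] at hcard
  rw [Module.finrank_fintype_fun_eq_card] at hdim
  omega

end Matrix.IsHermitian

section Laplacian

variable {V : Type} [Fintype V] [DecidableEq V] (G : SimpleGraph V)

lemma laplacian_eq_lapMatrix [DecidableRel G.Adj] : laplacian G = G.lapMatrix ℝ := by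
  unfold laplacian lapMatrix degMatrix
  congr!

lemma laplacian_mulVec_one : laplacian G *ᵥ (fun _ => 1) = 0 := by
  classical
  rw [laplacian_eq_lapMatrix]
  exact lapMatrix_mulVec_const_eq_zero G

lemma dotProduct_laplacian_mulVec [DecidableRel G.Adj] (x : V → ℝ) :
    x ⬝ᵥ (laplacian G *ᵥ x) = (∑ i, ∑ j, if G.Adj i j then (x i - x j) ^ 2 else 0) / 2 := by
  rw [laplacian_eq_lapMatrix, ← toLinearMap₂'_apply', lapMatrix_toLinearMap₂']

lemma countP_lapEigsSorted (p : ℝ → Prop) [DecidablePred p] :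
    (lapEigsSorted G).countP p = #{i | p ((laplacian_isHermitian G).eigenvalues i)} := by
  rw [lapEigsSorted, ← Multiset.coe_countP, Multiset.sort_eq, Multiset.countP_map,
    ← Finset.filter_val, Finset.card_val]

lemma mu2_le_of_two_le_card {c : ℝ}
    (h : 2 ≤ #{i | (laplacian_isHermitian G).eigenvalues i ≤ c}) : mu2 G ≤ c :=
  List.getD_one_le_of_two_le_countP (Multiset.pairwise_sort _ _)
    (by simpa [countP_lapEigsSorted] using h)

lemma le_mu2_of_card_le_one {c : ℝ} (hV : 2 ≤ Fintype.card V)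
    (h : #{i | (laplacian_isHermitian G).eigenvalues i < c} ≤ 1) : c ≤ mu2 G :=
  List.le_getD_one_of_countP_le_one (Multiset.pairwise_sort _ _)
    (by simpa [lapEigsSorted] using hV) (by simpa [countP_lapEigsSorted] using h)

lemma mu2_le_of_dotProduct_laplacian_mulVec_le {c : ℝ} (hc : 0 ≤ c) {y : V → ℝ} (hy0 : y ≠ 0)
    (hy : ∑ v, y v = 0) (hyc : y ⬝ᵥ (laplacian G *ᵥ y) ≤ c * (y ⬝ᵥ y)) : mu2 G ≤ c := by
  refine mu2_le_of_two_le_card G ((laplacian_isHermitian G).two_le_card_eigenvalues_le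
    (laplacian_mulVec_one G) (fun h => hy0 ?_) hy0 (by simpa [dotProduct] using hy) hc hyc)
  ext v
  exact absurd (congrFun h v) one_ne_zero

lemma le_mu2_of_forall_le_dotProduct_laplacian_mulVec {c : ℝ} (hV : 2 ≤ Fintype.card V)
    (h : ∀ z : V → ℝ, ∑ v, z v = 0 → c * (z ⬝ᵥ z) ≤ z ⬝ᵥ (laplacian G *ᵥ z)) : c ≤ mu2 G := by
  have : Nonempty V := Fintype.card_pos_iff.mp (by omega)
  exact le_mu2_of_card_le_one G hV ((laplacian_isHermitian G).card_eigenvalues_lt_le_one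
    (e := fun _ => 1) (fun h1 => one_ne_zero (congrFun h1 (Classical.arbitrary V)))
    fun z hz => h z (by simpa [dotProduct] using hz))

lemma mul_laplacian_mulVec_le_degree_mul [DecidableRel G.Adj] {v : V} {y : V → ℝ}
    (hyN : ∀ u, G.Adj v u → y u = 0) (hyT : ∀ u, u ≠ v → ¬ G.Adj v u → y u = -1) (w : V) :
    y w * (laplacian G *ᵥ y) w ≤ G.degree v * (y w * y w) := by
  rw [laplacian_eq_lapMatrix, lapMatrix_mulVec_apply]
  by_cases hwv : w = v
  · subst hwv
    rw [sum_eq_zero fun u hu => hyN u ((G.mem_neighborFinset _ _).mp hu)]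
    exact (by ring : _ = _).le
  by_cases hvw : G.Adj v w
  · simp [hyN w hvw]
  -- for a non-neighbour `w` of `v`, the left side counts the common neighbours of `v` and `w`
  have hterm : ∀ u ∈ G.neighborFinset w, 1 + y u = if G.Adj v u then 1 else 0 := by
    intro u hu
    have huv : u ≠ v := by
      rintro rfl
      exact hvw ((G.mem_neighborFinset _ _).mp hu).symm
    by_cases hvu : G.Adj v u
    · simp [hyN u hvu, hvu]
    · simp [hyT u huv hvu, hvu]
  calc y w * (G.degree w * y w - ∑ u ∈ G.neighborFinset w, y u)
      = ∑ u ∈ G.neighborFinset w, (1 + y u) := by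
        rw [hyT w hwv hvw, sum_add_distrib, ← G.card_neighborFinset_eq_degree]
        simp [add_comm]
    _ = #{u ∈ G.neighborFinset w | G.Adj v u} := by rw [sum_congr rfl hterm, sum_boole]
    _ ≤ #(G.neighborFinset v) := by
        exact_mod_cast card_le_card fun u hu => (G.mem_neighborFinset _ _).mpr (mem_filter.mp hu).2
    _ = G.degree v * (y w * y w) := by simp [hyT w hwv hvw]

lemma mu2_le_degree [DecidableRel G.Adj] (v : V) (hv : G.degree v + 1 < Fintype.card V) :
    mu2 G ≤ G.degree v := by
  set T := (insert v (G.neighborFinset v))ᶜ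
  have hT : 1 ≤ (#T : ℝ) := by
    have : #T = Fintype.card V - (G.degree v + 1) := by
      rw [card_compl, card_insert_of_notMem (G.notMem_neighborFinset_self v),
        G.card_neighborFinset_eq_degree]
    exact_mod_cast (by omega : 1 ≤ #T)
  set y : V → ℝ := fun w => (if w = v then (#T : ℝ) else 0) - (if w ∈ T then 1 else 0)
  have hyv : y v = #T := by simp [y, T]
  have hyN : ∀ u, G.Adj v u → y u = 0 := fun u hu => by simp [y, T, hu, hu.ne']
  have hyT : ∀ u, u ≠ v → ¬ G.Adj v u → y u = -1 := fun u huv hvu => by simp [y, T, huv, hvu]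
  refine mu2_le_of_dotProduct_laplacian_mulVec_le G (Nat.cast_nonneg _) (y := y)
    (fun h => absurd (hT.trans_eq hyv.symm) (by simp [h])) (by simp [y, sum_sub_distrib]) ?_
  rw [dotProduct, dotProduct, mul_sum]
  exact sum_le_sum fun w _ => mul_laplacian_mulVec_le_degree_mul G hyN hyT w

end Laplacian

namespace SimpleGraph

variable {V : Type} [Fintype V] [DecidableEq V] (G : SimpleGraph V) [DecidableRel G.Adj]

lemma exists_isNClique_of_forall_card_le_degree_add {t : ℕ}
    (hdeg : ∀ v, Fintype.card V ≤ G.degree v + t) :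
    ∀ k, k * t < Fintype.card V → ∃ s, G.IsNClique (k + 1) s
  | 0, hk => by
    obtain ⟨v⟩ := (Fintype.card_pos_iff (α := V)).mp (by omega)
    exact ⟨{v}, isNClique_singleton.mpr rfl⟩
  | k + 1, hk => by
    obtain ⟨s, hs⟩ := exists_isNClique_of_forall_card_le_degree_add hdeg k
      (lt_of_le_of_lt (Nat.mul_le_mul_right t k.le_succ) hk)
    set B := s.biUnion fun u => (G.neighborFinset u)ᶜ
    have hB : #B < #(univ : Finset V) := by
      calc #B ≤ ∑ u ∈ s, #(G.neighborFinset u)ᶜ := card_biUnion_le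
        _ ≤ ∑ _u ∈ s, t := sum_le_sum fun u _ => by
          rw [card_compl, card_neighborFinset_eq_degree]
          have := hdeg u
          omega
        _ < #(univ : Finset V) := by rw [sum_const, hs.card_eq, smul_eq_mul, card_univ]; exact hk
    obtain ⟨w, -, hw⟩ := exists_mem_notMem_of_card_lt_card hB
    refine ⟨insert w s, hs.insert fun u hu => ?_⟩
    by_contra hwu
    exact hw (mem_biUnion.mpr ⟨u, hu, by simpa [G.adj_comm] using hwu⟩)

lemma CliqueFree.exists_degree_add_lt {G : SimpleGraph V} [DecidableRel G.Adj] {k t : ℕ}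
    (hG : G.CliqueFree (k + 1)) (hk : k * t < Fintype.card V) :
    ∃ v, G.degree v + t < Fintype.card V := by
  by_contra! h
  obtain ⟨s, hs⟩ := exists_isNClique_of_forall_card_le_degree_add G h k hk
  exact hG s hs

end SimpleGraph

lemma sum_sum_sub_sq {V : Type*} (s : Finset V) (z : V → ℝ) :
    ∑ v ∈ s, ∑ w ∈ s, (z v - z w) ^ 2 = 2 * #s * ∑ v ∈ s, z v ^ 2 - 2 * (∑ v ∈ s, z v) ^ 2 := by
  have h : ∀ v w, (z v - z w) ^ 2 = z v ^ 2 + z w ^ 2 - 2 * z v * z w := fun v w => by ring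
  simp only [h, sum_add_distrib, sum_sub_distrib, sum_const, nsmul_eq_mul, ← mul_sum, ← sum_mul]
  ring

lemma sum_sum_ite_eq_sub_sq_le {V ι : Type*} [Fintype V] [DecidableEq ι] (p : V → ι) {C : ℕ}
    (hC : ∀ k, #{v | p v = k} ≤ C) (z : V → ℝ) :
    ∑ v, ∑ w, (if p v = p w then (z v - z w) ^ 2 else 0) ≤ 2 * C * ∑ v, z v ^ 2 := by
  have hmaps : ∀ v ∈ (univ : Finset V), p v ∈ univ.image p := fun v _ => mem_image_of_mem p
    (mem_univ v)
  calc ∑ v, ∑ w, (if p v = p w then (z v - z w) ^ 2 else 0)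
      = ∑ k ∈ univ.image p, ∑ v ∈ {v | p v = k}, ∑ w ∈ {w | p w = k}, (z v - z w) ^ 2 := by
        rw [← sum_fiberwise_of_maps_to hmaps]
        refine sum_congr rfl fun k _ => sum_congr rfl fun v hv => ?_
        rw [sum_ite, sum_const_zero, add_zero, (mem_filter.mp hv).2]
        simp_rw [eq_comm]
    _ ≤ ∑ k ∈ univ.image p, 2 * C * ∑ v ∈ {v | p v = k}, z v ^ 2 := by
        refine sum_le_sum fun k _ => ?_
        rw [sum_sum_sub_sq]
        have : (#{v | p v = k} : ℝ) ≤ C := by exact_mod_cast hC k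
        have : (0 : ℝ) ≤ ∑ v ∈ {v | p v = k}, z v ^ 2 := sum_nonneg fun v _ => sq_nonneg _
        nlinarith [sq_nonneg (∑ v ∈ {v | p v = k}, z v)]
    _ = 2 * C * ∑ v, z v ^ 2 := by rw [← mul_sum, sum_fiberwise_of_maps_to hmaps]

lemma card_filter_mod_eq_le {n r : ℕ} (hr : 0 < r) (k : ℕ) :
    #{v : Fin n | v % r = k} ≤ (n + r - 1) / r := by
  calc #{v : Fin n | v % r = k} ≤ #(range ((n + r - 1) / r)) := by
        refine card_le_card_of_injOn (fun v => v / r) (fun v _ => ?_) fun v hv w hw hvw => ?_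
        · simp only [coe_range, Set.mem_Iio]
          have := Nat.div_add_mod (n + r - 1) r
          have := Nat.mod_lt (n + r - 1) hr
          rw [Nat.div_lt_iff_lt_mul hr, mul_comm]
          omega
        · simp only [coe_filter, mem_univ, true_and, Set.mem_ofPred_eq] at hv hw
          exact Fin.ext (by rw [← Nat.div_add_mod v r, ← Nat.div_add_mod w r, hv, hw]; simp_all)
    _ = (n + r - 1) / r := card_range _

lemma le_dotProduct_laplacian_turanGraph_mulVec {n r : ℕ} (hr : 0 < r) {z : Fin n → ℝ}
    (hz : ∑ v, z v = 0) :
    ((n : ℝ) - ((n + r - 1) / r : ℕ)) * (z ⬝ᵥ z) ≤ z ⬝ᵥ (laplacian (turanGraph n r) *ᵥ z) := by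
  have hsplit : ∀ v w : Fin n, (if (turanGraph n r).Adj v w then (z v - z w) ^ 2 else 0) =
      (z v - z w) ^ 2 - if (v : ℕ) % r = w % r then (z v - z w) ^ 2 else 0 := by
    intro v w
    by_cases h : (v : ℕ) % r = w % r <;> simp [turanGraph_adj, h]
  have hall := sum_sum_sub_sq univ z
  have hpart := sum_sum_ite_eq_sub_sq_le (fun v : Fin n => (v : ℕ) % r)
    (card_filter_mod_eq_le hr) z
  rw [dotProduct_laplacian_mulVec]
  simp only [hsplit, sum_sub_distrib, card_univ, Fintype.card_fin, hz] at hall ⊢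
  simp only [dotProduct, ← sq]
  linarith

/-- For `n > r ≥ 2`, every `K_{r+1}`-free graph `G` of order `n` has
algebraic connectivity `μ₂(G) ≤ n - ⌈n/r⌉`, and this bound is attained by the Turán
graph `T_r(n)`, which is `K_{r+1}`-free. -/
theorem mu2_le_of_cliqueFree (n r : ℕ) (hr : 2 ≤ r) (hn : r < n)
    (G : SimpleGraph (Fin n)) (hG : G.CliqueFree (r + 1)) :
    mu2 G ≤ (n : ℝ) - ((n + r - 1) / r : ℕ) ∧
    (turanGraph n r).CliqueFree (r + 1) ∧
    mu2 (turanGraph n r) = (n : ℝ) - ((n + r - 1) / r : ℕ) := by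
  set C := (n + r - 1) / r
  have hr0 : 0 < r := by omega
  have hC : 2 ≤ C := (Nat.le_div_iff_mul_le hr0).mpr (by omega)
  have hrC : r * (C - 1) < n := by
    have : C * r ≤ n + r - 1 := Nat.div_mul_le_self _ _
    rw [Nat.mul_sub_one, mul_comm]
    omega
  have hbound (H : SimpleGraph (Fin n)) (hH : H.CliqueFree (r + 1)) : mu2 H ≤ n - C := by
    classical
    obtain ⟨v, hv⟩ := hH.exists_degree_add_lt (by rwa [Fintype.card_fin])
    rw [Fintype.card_fin] at hv
    calc mu2 H ≤ H.degree v := mu2_le_degree H v (by rw [Fintype.card_fin]; omega)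
      _ ≤ n - C := by
        rw [le_sub_iff_add_le]
        exact_mod_cast (by omega : H.degree v + C ≤ n)
  have hT := turanGraph_cliqueFree (n := n) hr0
  refine ⟨hbound G hG, hT, le_antisymm (hbound _ hT) ?_⟩
  exact le_mu2_of_forall_le_dotProduct_laplacian_mulVec _ (by rw [Fintype.card_fin]; omega)
    fun z hz => le_dotProduct_laplacian_turanGraph_mulVec hr0 hz
end
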